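/- Idempotence of the λDD-O-UC reduction operator: for every λDD-O-UC graph φ, [[φ]] = [φ]. -/
import Mathlib


abbrev BF (n : ℕ) : Type := (Fin n → Bool) → Bool

def shannon {n : ℕ} (f g : BF n) : BF (n + 1) :=
  fun x => (!(x 0) && f (Fin.tail x)) || (x 0 && g (Fin.tail x))

def constF (n : ℕ) (b : Bool) : BF n := fun _ => b

/-- The elementary letters of the alphabet Δ = {u, c11, c10, c01, c00}. -/
inductive UCLetter : Type
  | u | c11 | c10 | c01 | c00
deriving DecidableEq

/-- λDD-O-UC graphs of a given arity. -/
inductive UC : ℕ → Type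
  | leaf0 : UC 0
  | leaf1 : UC 0
  | letter {n : ℕ} : UCLetter → UC n → UC (n + 1)
  | node {n : ℕ} : UC n → UC n → UC (n + 1)
deriving DecidableEq

/-- Semantics of λDD-O-UC graphs. -/
def UC.sem : {n : ℕ} → UC n → BF n
  | _, .leaf0 => constF 0 false
  | _, .leaf1 => constF 0 true
  | _, .letter .u φ => shannon φ.sem φ.sem
  | _, .letter .c11 φ => shannon φ.sem (constF _ true)
  | _, .letter .c10 φ => shannon φ.sem (constF _ false)
  | _, .letter .c01 φ => shannon (constF _ true) φ.sem
  | _, .letter .c00 φ => shannon (constF _ false) φ.sem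
  | _, .node φ₁ φ₂ => shannon φ₁.sem φ₂.sem

/-- The graph (𝟘, n). -/
def UC.mkZero : (n : ℕ) → UC n
  | 0 => .leaf0
  | n + 1 => .letter .u (UC.mkZero n)

/-- The graph (𝟙, n). -/
def UC.mkOne : (n : ℕ) → UC n
  | 0 => .leaf1
  | n + 1 => .letter .u (UC.mkOne n)

/-- The smart constructor ⊛ (match cases in priority order). -/
def UC.smart {n : ℕ} (φ₁ φ₂ : UC n) : UC (n + 1) :=
  if φ₁ = φ₂ then .letter .u φ₁
  else if φ₂ = UC.mkOne n then .letter .c11 φ₁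
  else if φ₂ = UC.mkZero n then .letter .c10 φ₁
  else if φ₁ = UC.mkOne n then .letter .c01 φ₂
  else if φ₁ = UC.mkZero n then .letter .c00 φ₂
  else .node φ₁ φ₂

def UC.size : {n : ℕ} → UC n → ℕ
  | _, .leaf0 => 1
  | _, .leaf1 => 1
  | _, .letter _ φ => φ.size + 1
  | _, .node φ₁ φ₂ => φ₁.size + φ₂.size + 1

theorem UC.lt_size : ∀ {n : ℕ} (φ : UC n), n < φ.size := by
  intro n φ
  induction φ with
  | leaf0 => simp [UC.size]
  | leaf1 => simp [UC.size]
  | letter _ φ ih => simp [UC.size]; omega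
  | node φ₁ φ₂ ih₁ ih₂ => simp [UC.size]; omega

theorem UC.size_mkZero (n : ℕ) : (UC.mkZero n).size = n + 1 := by
  induction n with
  | zero => rfl
  | succ n ih => simp [UC.mkZero, UC.size, ih]

theorem UC.size_mkOne (n : ℕ) : (UC.mkOne n).size = n + 1 := by
  induction n with
  | zero => rfl
  | succ n ih => simp [UC.mkOne, UC.size, ih]

/-- The reduction operator [·]: eliminate each letter and re-introduce via ⊛. -/
def UC.reduce : {n : ℕ} → UC n → UC n
  | _, .leaf0 => .leaf0
  | _, .leaf1 => .leaf1
  | _, .letter .u φ => UC.smart φ.reduce φ.reduce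
  | _, .letter .c11 φ => UC.smart φ.reduce (UC.mkOne _).reduce
  | _, .letter .c10 φ => UC.smart φ.reduce (UC.mkZero _).reduce
  | _, .letter .c01 φ => UC.smart (UC.mkOne _).reduce φ.reduce
  | _, .letter .c00 φ => UC.smart (UC.mkZero _).reduce φ.reduce
  | _, .node φ₁ φ₂ => UC.smart φ₁.reduce φ₂.reduce
  termination_by n φ => φ.size
  decreasing_by
    all_goals simp [UC.size, UC.size_mkOne, UC.size_mkZero]
    all_goals first
      | omega
      | (have := UC.lt_size φ; omega)

theorem UC.reduce_mkOne : ∀ n, (UC.mkOne n).reduce = UC.mkOne n := by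
  intro n
  induction n with
  | zero => simp [UC.mkOne, UC.mkZero, UC.reduce]
  | succ n ih => simp [UC.mkOne, UC.reduce, ih, UC.smart]

theorem UC.reduce_mkZero : ∀ n, (UC.mkZero n).reduce = UC.mkZero n := by
  intro n
  induction n with
  | zero => simp [UC.mkOne, UC.mkZero, UC.reduce]
  | succ n ih => simp [UC.mkZero, UC.reduce, ih, UC.smart]

theorem UC.mkZero_ne_mkOne : ∀ n, UC.mkZero n ≠ UC.mkOne n := by
  intro n
  induction n with
  | zero => simp [UC.mkZero, UC.mkOne]
  | succ n ih => simp [UC.mkZero, UC.mkOne, ih]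

theorem UC.reduce_smart {n : ℕ} (a b : UC n) (ha : a.reduce = a)
    (hb : b.reduce = b) : (a.smart b).reduce = a.smart b := by
  unfold UC.smart
  split_ifs with h1 h2 h3 h4 h5 <;>
    simp_all [UC.reduce, UC.smart, UC.reduce_mkOne, UC.reduce_mkZero,
      UC.mkZero_ne_mkOne]

theorem UC.reduce_idem {n : ℕ} (φ : UC n) : φ.reduce.reduce = φ.reduce := by
  induction φ with
  | leaf0 => simp [UC.reduce]
  | leaf1 => simp [UC.reduce]
  | letter l φ ih =>
    cases l <;>
      simp [UC.reduce, UC.reduce_smart, ih, UC.reduce_mkOne, UC.reduce_mkZero]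
  | node φ₁ φ₂ ih₁ ih₂ =>
    simp [UC.reduce, UC.reduce_smart, ih₁, ih₂]
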